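/- Let G be a 3-γc-critical graph with minimum vertex cut S and maximum independent set I, and write G − S as a disjoint union of two parts H₁ and H₂ (each a nonempty union of components). If |S \ I| ≥ 2 and α(G) ≥ κ(G) + 1, then |H₁| = 1 or |H₂| = 1. -/

import Mathlib

open SimpleGraph Finset

variable {V : Type*}

/-- The graph `G` with the extra edge `uv` added. -/
def SimpleGraph.addEdge (G : SimpleGraph V) (u v : V) : SimpleGraph V :=
  G ⊔ SimpleGraph.fromEdgeSet {s(u, v)}

/-- `D` is a connected dominating set of `G`. -/
def SimpleGraph.IsCDS (G : SimpleGraph V) (D : Set V) : Prop :=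
  (∀ v : V, v ∈ D ∨ ∃ u ∈ D, G.Adj u v) ∧ (G.induce D).Connected

/-- The connected domination number. -/
noncomputable def SimpleGraph.cdn [Fintype V] (G : SimpleGraph V) : ℕ :=
  sInf {n | ∃ D : Finset V, D.card = n ∧ G.IsCDS ↑D}

/-- `G` is a `3`-`γ_c`-critical graph. -/
def SimpleGraph.IsCritical3 [Fintype V] (G : SimpleGraph V) : Prop :=
  G.Connected ∧ G.cdn = 3 ∧
    ∀ u v : V, u ≠ v → ¬G.Adj u v → (G.addEdge u v).cdn < 3

/-- `s` is an independent set of `G`. -/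
def SimpleGraph.IsIndepSet' (G : SimpleGraph V) (s : Set V) : Prop :=
  s.Pairwise (fun a b => ¬G.Adj a b)

/-- The independence number. -/
noncomputable def SimpleGraph.indepNum' [Fintype V] (G : SimpleGraph V) : ℕ :=
  sSup {n | ∃ s : Finset V, G.IsIndepSet' ↑s ∧ s.card = n}

/-- `S` is a vertex cut: removing it leaves a non-connected graph. -/
def SimpleGraph.IsVertexCut [Fintype V] (G : SimpleGraph V) (S : Finset V) : Prop :=
  ¬(G.induce ((↑S : Set V)ᶜ)).Connected

/-- The vertex connectivity: minimum size of a vertex cut. -/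
noncomputable def SimpleGraph.conn [Fintype V] (G : SimpleGraph V) : ℕ :=
  sInf {n | ∃ S : Finset V, S.card = n ∧ G.IsVertexCut S}

/-!
Suppose `H₁` and `H₂` both have at least two vertices. For non-adjacent `u`, `v`, a connected
dominating set of `G + uv` of size two shows that either `{u, v}` dominates `G` or `u →ₓ v` for
some `x`. If `u ∈ I \ S`, such an `x` lies in `S \ I` and is adjacent to all of `I` except `v`,
so distinct targets `v ∈ I` need distinct `x`. As `|I \ S| > |S \ I|`, some `e ∈ I \ S` is the
target of no such arrow; then `e →_{w f} f` for every other `f ∈ I \ S`, and `w` maps these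
bijectively onto `S \ I`. Hence every vertex of `S \ I` is adjacent to `e` and has exactly one
non-neighbour in `I`, and no vertex of `S` is adjacent to all of `I`.

Let `e ∈ H₂`. If `H₁ ⊆ I`, the neighbourhood of any `a ∈ H₁` is a vertex cut smaller than `S`.
Otherwise criticality at `e` and some `v ∈ H₁ \ I` forces `I ∩ H₂ = {e}` and makes `v` adjacent
to `I ∩ H₁`. Then for `a ∈ I ∩ H₁` either `{w a, v}` is a dominating edge, contradicting
`γc(G) = 3`, or criticality at `a` and a vertex of `H₂ \ I` not adjacent to `w a` contradicts
the facts above.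
-/

namespace SimpleGraph

def DominatedBy (G : SimpleGraph V) (a b z : V) : Prop :=
  z = a ∨ z = b ∨ G.Adj a z ∨ G.Adj b z

/-- `u →ₓ v` in the literature on `γc`-critical graphs: for non-adjacent `u`, `v`, the pair `{u, x}`
is a connected dominating set of `G + uv` but not of `G`. -/
def MissesOnly (G : SimpleGraph V) (u x v : V) : Prop :=
  G.Adj u x ∧ ¬G.Adj x v ∧ ∀ z, z ≠ v → G.DominatedBy u x z

variable {G : SimpleGraph V} {I T : Finset V} {a b i u v x z : V}

theorem addEdge_adj_iff :
    (G.addEdge u v).Adj a b ↔ G.Adj a b ∨ a ≠ b ∧ (a = u ∧ b = v ∨ a = v ∧ b = u) := by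
  simp only [addEdge, sup_adj, fromEdgeSet_adj, Set.mem_singleton_iff, Sym2.eq_iff]
  tauto

theorem addEdge_comm (G : SimpleGraph V) (u v : V) : G.addEdge u v = G.addEdge v u := by
  ext a b
  simp only [addEdge_adj_iff]
  tauto

theorem induce_pair_connected_iff : (G.induce {a, b}).Connected ↔ a = b ∨ G.Adj a b := by
  refine ⟨fun h => or_iff_not_imp_left.2 fun hab => ?_, ?_⟩
  · obtain ⟨w⟩ := h.preconnected ⟨a, by simp⟩ ⟨b, by simp⟩
    cases w with
    | nil => exact absurd rfl hab
    | @cons _ c _ hac _ =>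
      have hac : G.Adj a c.1 := hac
      obtain hc | hc := c.2
      · exact absurd (hc ▸ hac) (G.irrefl)
      · exact hc ▸ hac
  · rintro (rfl | hab)
    · rw [Set.pair_eq_singleton, induce_singleton_eq_top]
      exact connected_top
    · exact induce_pair_connected_of_adj hab

theorem dominatedBy_comm : G.DominatedBy a b z ↔ G.DominatedBy b a z := by
  unfold DominatedBy
  tauto

theorem IsIndepSet'.not_adj (hI : G.IsIndepSet' ↑I) (ha : a ∈ I) (hb : b ∈ I) : ¬G.Adj a b :=
  fun h => hI ha hb h.ne h

theorem MissesOnly.notMem (h : G.MissesOnly u x v) (hI : G.IsIndepSet' ↑I) (hu : u ∈ I) :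
    x ∉ I :=
  fun hx => hI.not_adj hu hx h.1

theorem MissesOnly.adj_of_mem (h : G.MissesOnly u x v) (hI : G.IsIndepSet' ↑I) (hu : u ∈ I)
    (hi : i ∈ I) (hiv : i ≠ v) : G.Adj x i := by
  obtain rfl | rfl | hui | hxi := h.2.2 i hiv
  · exact h.1.symm
  · exact absurd hi (h.notMem hI hu)
  · exact absurd hui (hI.not_adj hu hi)
  · exact hxi

theorem MissesOnly.eq_of_not_adj (h : G.MissesOnly u x v) (hI : G.IsIndepSet' ↑I) (hu : u ∈ I)
    (hi : i ∈ I) (hxi : ¬G.Adj x i) : i = v :=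
  by_contra fun hiv => hxi (h.adj_of_mem hI hu hi hiv)

theorem isVertexCut_of_forall_adj_mem [Fintype V] (ha : a ∉ T) (hb : b ∉ T) (hab : a ≠ b)
    (hN : ∀ z, G.Adj a z → z ∈ T) : G.IsVertexCut T := by
  intro hc
  obtain ⟨w⟩ := hc.preconnected ⟨a, ha⟩ ⟨b, hb⟩
  cases w with
  | nil => exact hab rfl
  | @cons _ c _ hac _ => exact c.2 (hN _ hac)

theorem cdn_le_card [Fintype V] {D : Finset V} (hD : G.IsCDS ↑D) : G.cdn ≤ D.card :=
  Nat.sInf_le ⟨D, rfl, hD⟩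

variable [DecidableEq V]

theorem isCDS_pair_iff :
    G.IsCDS ↑({a, b} : Finset V) ↔ (a = b ∨ G.Adj a b) ∧ ∀ z, G.DominatedBy a b z := by
  rw [IsCDS, coe_pair, induce_pair_connected_iff, and_comm]
  simp [DominatedBy, or_assoc]

theorem IsIndepSet'.exists_not_dominatedBy (hI : G.IsIndepSet' ↑I) (hcard : 2 < I.card)
    (ha : a ∈ I) (hb : b ∈ I) : ∃ z, ¬G.DominatedBy a b z := by
  obtain ⟨z, hz, hzb⟩ := exists_mem_ne (s := I.erase a) (by rw [card_erase_of_mem ha]; omega) b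
  obtain ⟨hza, hzI⟩ := mem_erase.1 hz
  exact ⟨z, by simp [DominatedBy, hza, hzb, hI.not_adj ha hzI, hI.not_adj hb hzI]⟩

variable [Fintype V]

theorem Connected.exists_isCDS_pair_of_cdn_lt_three (hc : G.Connected) (h : G.cdn < 3) :
    ∃ a b, G.IsCDS ↑({a, b} : Finset V) := by
  have huniv : G.IsCDS ↑(univ : Finset V) :=
    ⟨fun v => Or.inl (mem_univ v), by rw [coe_univ]; exact (induceUnivIso G).connected_iff.2 hc⟩
  obtain ⟨D, hcard, hD⟩ : ∃ D : Finset V, D.card = G.cdn ∧ G.IsCDS ↑D :=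
    Nat.sInf_mem (s := {n | ∃ D : Finset V, D.card = n ∧ G.IsCDS ↑D}) ⟨_, univ, rfl, huniv⟩
  have hpos : 0 < D.card := card_pos.2 (coe_nonempty.1 (Set.nonempty_coe_sort.1 hD.2.nonempty))
  obtain hD1 | hD2 : D.card = 1 ∨ D.card = 2 := by omega
  · obtain ⟨a, rfl⟩ := card_eq_one.1 hD1
    exact ⟨a, a, by simpa using hD⟩
  · obtain ⟨a, b, -, rfl⟩ := card_eq_two.1 hD2
    exact ⟨a, b, hD⟩

theorem IsCritical3.not_isCDS_pair (hG : G.IsCritical3) : ¬G.IsCDS ↑({a, b} : Finset V) :=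
  fun h => by
    have := cdn_le_card h
    have := card_le_two (a := a) (b := b)
    rw [hG.2.1] at *
    omega

theorem IsCritical3.not_dominatedBy (hG : G.IsCritical3) (hab : G.Adj a b) :
    ¬∀ z, G.DominatedBy a b z :=
  fun h => hG.not_isCDS_pair (isCDS_pair_iff.2 ⟨Or.inr hab, h⟩)

theorem IsCritical3.dominatedBy_or_missesOnly_of_isCDS (hG : G.IsCritical3) (huv : u ≠ v)
    (hD : (G.addEdge u v).IsCDS ↑({u, b} : Finset V)) :
    (∀ z, G.DominatedBy u v z) ∨ ∃ x, G.MissesOnly u x v := by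
  obtain ⟨hub, hdom⟩ := isCDS_pair_iff.1 hD
  simp only [DominatedBy, addEdge_adj_iff] at hub hdom
  by_cases hb : b = u ∨ b = v
  · exact .inl fun z => by grind [DominatedBy]
  have hub' : G.Adj u b := by grind
  have hdom' : ∀ z, z ≠ v → G.DominatedBy u b z := fun z hz => by grind [DominatedBy]
  refine .inr ⟨b, hub', fun hbv => hG.not_dominatedBy hub' fun z => ?_, hdom'⟩
  by_cases hz : z = v
  · exact hz ▸ .inr (.inr (.inr hbv))
  · exact hdom' z hz

theorem IsCritical3.dominatedBy_or_missesOnly (hG : G.IsCritical3) (huv : u ≠ v)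
    (hadj : ¬G.Adj u v) :
    (∀ z, G.DominatedBy u v z) ∨ (∃ x, G.MissesOnly u x v) ∨ ∃ x, G.MissesOnly v x u := by
  obtain ⟨a, b, hD⟩ : ∃ a b, (G.addEdge u v).IsCDS ↑({a, b} : Finset V) :=
    (hG.1.mono (le_sup_left : G ≤ G.addEdge u v)).exists_isCDS_pair_of_cdn_lt_three
      (hG.2.2 u v huv hadj)
  by_cases hu : a = u ∨ b = u
  · obtain ⟨c, hc⟩ : ∃ c, ({a, b} : Finset V) = {u, c} := by
      rcases hu with rfl | rfl
      exacts [⟨b, rfl⟩, ⟨a, pair_comm _ _⟩]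
    rw [hc] at hD
    exact (hG.dominatedBy_or_missesOnly_of_isCDS huv hD).imp_right Or.inl
  by_cases hv : a = v ∨ b = v
  · obtain ⟨c, hc⟩ : ∃ c, ({a, b} : Finset V) = {v, c} := by
      rcases hv with rfl | rfl
      exacts [⟨b, rfl⟩, ⟨a, pair_comm _ _⟩]
    rw [hc, addEdge_comm] at hD
    obtain h | h := hG.dominatedBy_or_missesOnly_of_isCDS huv.symm hD
    · exact Or.inl fun z => dominatedBy_comm.1 (h z)
    · exact Or.inr (Or.inr h)
  simp only [not_or] at hu hv
  obtain ⟨hab, hdom⟩ := isCDS_pair_iff.1 hD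
  simp only [DominatedBy, addEdge_adj_iff] at hab hdom
  exact (hG.not_isCDS_pair (a := a) (b := b)
    (isCDS_pair_iff.2 ⟨by grind, fun z => by grind [DominatedBy]⟩)).elim

end SimpleGraph

section

variable {G : SimpleGraph V} {S I P Q : Finset V} {a b e f p u v x z : V} {w : V → V}

structure CutConfig [Fintype V] (G : SimpleGraph V) (S I P Q : Finset V) : Prop where
  critical : G.IsCritical3
  card_le_of_isVertexCut : ∀ T : Finset V, G.IsVertexCut T → S.card ≤ T.card
  notMem_iff : ∀ z, z ∉ S ↔ z ∈ P ∨ z ∈ Q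
  disjoint : Disjoint P Q
  not_adj : ∀ a ∈ P, ∀ b ∈ Q, ¬G.Adj a b
  indep : G.IsIndepSet' ↑I
  one_lt_card_left : 1 < P.card
  one_lt_card_right : 1 < Q.card

namespace CutConfig

variable [Fintype V]

theorem symm (C : CutConfig G S I P Q) : CutConfig G S I Q P where
  critical := C.critical
  card_le_of_isVertexCut := C.card_le_of_isVertexCut
  notMem_iff z := (C.notMem_iff z).trans or_comm
  disjoint := C.disjoint.symm
  not_adj a ha b hb h := C.not_adj b hb a ha h.symm
  indep := C.indep
  one_lt_card_left := C.one_lt_card_right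
  one_lt_card_right := C.one_lt_card_left

theorem notMem_of_mem_left (C : CutConfig G S I P Q) (hz : z ∈ P) : z ∉ S :=
  (C.notMem_iff z).2 (Or.inl hz)

theorem notMem_of_mem_right (C : CutConfig G S I P Q) (hz : z ∈ Q) : z ∉ S :=
  (C.notMem_iff z).2 (Or.inr hz)

theorem mem_of_notMem (C : CutConfig G S I P Q) (hP : z ∉ P) (hQ : z ∉ Q) : z ∈ S :=
  by_contra fun hS => ((C.notMem_iff z).1 hS).elim hP hQ

theorem ne_of_mem (C : CutConfig G S I P Q) (ha : a ∈ P) (hb : b ∈ Q) : a ≠ b :=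
  fun h => disjoint_left.1 C.disjoint ha (h ▸ hb)

theorem not_dominatedBy (C : CutConfig G S I P Q) (ha : a ∈ P) (hb : b ∈ P) (hz : z ∈ Q) :
    ¬G.DominatedBy a b z := by
  rintro (rfl | rfl | h | h)
  · exact C.ne_of_mem ha hz rfl
  · exact C.ne_of_mem hb hz rfl
  · exact C.not_adj a ha z hz h
  · exact C.not_adj b hb z hz h

theorem mem_of_missesOnly_of_mem_left (C : CutConfig G S I P Q) (hu : u ∈ P)
    (h : G.MissesOnly u x v) : x ∈ S := by
  refine C.mem_of_notMem (fun hx => ?_) (fun hx => C.not_adj u hu x hx h.1)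
  obtain ⟨z, hz, hzv⟩ := exists_mem_ne C.one_lt_card_right v
  exact C.not_dominatedBy hu hx hz (h.2.2 z hzv)

theorem mem_of_missesOnly (C : CutConfig G S I P Q) (hu : u ∉ S) (h : G.MissesOnly u x v) :
    x ∈ S :=
  ((C.notMem_iff u).1 hu).elim (C.mem_of_missesOnly_of_mem_left · h)
    (C.symm.mem_of_missesOnly_of_mem_left · h)

theorem mem_sdiff_of_missesOnly [DecidableEq V] (C : CutConfig G S I P Q) (hu : u ∈ I \ S)
    (h : G.MissesOnly u x v) : x ∈ S \ I :=
  mem_sdiff.2 ⟨C.mem_of_missesOnly (mem_sdiff.1 hu).2 h, h.notMem C.indep (mem_sdiff.1 hu).1⟩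

end CutConfig

variable [DecidableEq V]

structure IsPivot (G : SimpleGraph V) (S I : Finset V) (e : V) (w : V → V) : Prop where
  mem : e ∈ I \ S
  missesOnly : ∀ f ∈ (I \ S).erase e, G.MissesOnly e (w f) f
  surjOn : Set.SurjOn w ↑((I \ S).erase e) ↑(S \ I)
  one_lt_card : 1 < ((I \ S).erase e).card

namespace CutConfig

variable [Fintype V]

theorem exists_forall_not_missesOnly (C : CutConfig G S I P Q)
    (hcard : (S \ I).card < (I \ S).card) :
    ∃ e ∈ I \ S, ∀ p ∈ I \ S, ∀ x, ¬G.MissesOnly p x e := by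
  -- otherwise `x` injects `I \ S` into `S \ I`
  by_contra! h
  choose! p hp x hx using h
  have hmaps : Set.MapsTo x ↑(I \ S) ↑(S \ I) := fun f hf =>
    C.mem_sdiff_of_missesOnly (hp f hf) (hx f hf)
  have hinj : Set.InjOn x ↑(I \ S) := fun f hf g hg hfg =>
    ((hx f hf).eq_of_not_adj C.indep (mem_sdiff.1 (hp f hf)).1 (mem_sdiff.1 hg).1
      (hfg ▸ (hx g hg).2.1)).symm
  exact absurd (card_le_card_of_injOn x hmaps hinj) (not_le.2 hcard)

theorem exists_isPivot (C : CutConfig G S I P Q) (hSI : 2 ≤ (S \ I).card)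
    (hIS : S.card < I.card) : ∃ e w, IsPivot G S I e w := by
  have hcard := card_sdiff_lt_card_sdiff_iff.2 hIS
  obtain ⟨e, he, hnot⟩ := C.exists_forall_not_missesOnly hcard
  have heI := (mem_sdiff.1 he).1
  have hI : 2 < I.card := (hSI.trans_lt hcard).trans_le (card_le_card sdiff_subset)
  have hw : ∀ f ∈ (I \ S).erase e, ∃ x, G.MissesOnly e x f := fun f hf => by
    obtain ⟨hfe, hf'⟩ := mem_erase.1 hf
    have hfI := (mem_sdiff.1 hf').1
    obtain h | h | ⟨x, h⟩ :=
      C.critical.dominatedBy_or_missesOnly (Ne.symm hfe) (C.indep.not_adj heI hfI)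
    · obtain ⟨z, hz⟩ := C.indep.exists_not_dominatedBy hI heI hfI
      exact absurd (h z) hz
    · exact h
    · exact absurd h (hnot f hf' x)
  choose! w hw using hw
  have hJ : ((I \ S).erase e).card = (I \ S).card - 1 := card_erase_of_mem he
  refine ⟨e, w, he, hw, surjOn_of_injOn_of_card_le w (fun f hf => ?_) (fun f hf g hg hfg => ?_)
    (by omega), by omega⟩
  · exact C.mem_sdiff_of_missesOnly he (hw f hf)
  · exact ((hw f hf).eq_of_not_adj C.indep heI (mem_sdiff.1 (mem_of_mem_erase hg)).1
      (hfg ▸ (hw g hg).2.1)).symm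

end CutConfig

namespace IsPivot

theorem adj (hpiv : IsPivot G S I e w) (hx : x ∈ S \ I) : G.Adj e x := by
  obtain ⟨f, hf, rfl⟩ := hpiv.surjOn (mem_coe.2 hx)
  exact (hpiv.missesOnly f hf).1

theorem exists_not_adj (hpiv : IsPivot G S I e w) (hx : x ∈ S) : ∃ i ∈ I, ¬G.Adj x i := by
  by_cases hxI : x ∈ I
  · exact ⟨x, hxI, G.irrefl⟩
  obtain ⟨f, hf, rfl⟩ := hpiv.surjOn (mem_coe.2 (mem_sdiff.2 ⟨hx, hxI⟩))
  exact ⟨f, (mem_sdiff.1 (mem_of_mem_erase hf)).1, (hpiv.missesOnly f hf).2.1⟩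

theorem eq_apply (hpiv : IsPivot G S I e w) (hI : G.IsIndepSet' ↑I) (hx : x ∈ S \ I)
    (hf : f ∈ I) (hxf : ¬G.Adj x f) : x = w f := by
  obtain ⟨g, hg, rfl⟩ := hpiv.surjOn (mem_coe.2 hx)
  rw [(hpiv.missesOnly g hg).eq_of_not_adj hI (mem_sdiff.1 hpiv.mem).1 hf hxf]

variable [Fintype V]

theorem not_missesOnly (hpiv : IsPivot G S I e w) (C : CutConfig G S I P Q) (hp : p ∈ I \ S)
    (hv : v ∉ I) : ¬G.MissesOnly p x v := fun h => by
  obtain ⟨i, hi, hxi⟩ := hpiv.exists_not_adj (C.mem_of_missesOnly (mem_sdiff.1 hp).2 h)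
  exact hxi (h.adj_of_mem C.indep (mem_sdiff.1 hp).1 hi (ne_of_mem_of_not_mem hi hv))

theorem adj_of_mem_sdiff (hpiv : IsPivot G S I e w) (C : CutConfig G S I P Q) (he : e ∈ Q)
    (hv : v ∈ P) (hvI : v ∉ I) (hx : x ∈ S \ I) : G.Adj x v := by
  obtain ⟨f, hf, rfl⟩ := hpiv.surjOn (mem_coe.2 hx)
  have hfI := (mem_sdiff.1 (mem_of_mem_erase hf)).1
  obtain rfl | h | h | h := (hpiv.missesOnly f hf).2.2 v (ne_of_mem_of_not_mem hfI hvI).symm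
  · exact absurd he (disjoint_left.1 C.disjoint hv)
  · exact absurd (h ▸ (mem_sdiff.1 hx).1) (C.notMem_of_mem_left hv)
  · exact absurd h.symm (C.not_adj v hv e he)
  · exact h

end IsPivot

namespace CutConfig

variable [Fintype V]

theorem exists_mem_left_notMem (C : CutConfig G S I P Q) (hpiv : IsPivot G S I e w)
    (he : e ∈ Q) : ∃ v ∈ P, v ∉ I := by
  by_contra! hPI
  obtain ⟨a, haP⟩ := card_pos.1 (zero_lt_one.trans C.one_lt_card_left)
  have haI := hPI a haP
  have ha : a ∈ (I \ S).erase e :=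
    mem_erase.2 ⟨C.ne_of_mem haP he, mem_sdiff.2 ⟨haI, C.notMem_of_mem_left haP⟩⟩
  -- `N(a) ⊆ (S \ I).erase (w a)`, a vertex cut smaller than `S`
  have hN : ∀ z, G.Adj a z → z ∈ (S \ I).erase (w a) := fun z hz => by
    have hzS : z ∈ S := C.mem_of_notMem (fun hzP => C.indep.not_adj haI (hPI z hzP) hz)
      fun hzQ => C.not_adj a haP z hzQ hz
    refine mem_erase.2 ⟨?_, mem_sdiff.2 ⟨hzS, fun hzI => C.indep.not_adj haI hzI hz⟩⟩
    rintro rfl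
    exact (hpiv.missesOnly a ha).2.1 hz.symm
  have hcut := isVertexCut_of_forall_adj_mem
    (fun h => C.notMem_of_mem_left haP (mem_sdiff.1 (mem_of_mem_erase h)).1)
    (fun h => C.notMem_of_mem_right he (mem_sdiff.1 (mem_of_mem_erase h)).1)
    (C.ne_of_mem haP he) hN
  have hwa := C.mem_sdiff_of_missesOnly hpiv.mem (hpiv.missesOnly a ha)
  exact (C.card_le_of_isVertexCut _ hcut).not_gt
    ((card_erase_lt_of_mem hwa).trans_le (card_le_card sdiff_subset))

theorem exists_partner (C : CutConfig G S I P Q) (hpiv : IsPivot G S I e w) (he : e ∈ Q)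
    (hv : v ∈ P) (hvI : v ∉ I) : ∃ y ∈ I, (y ∈ S ∨ y = e) ∧ ∀ z, z ≠ e → G.DominatedBy v y z := by
  obtain ⟨heI, heS⟩ := mem_sdiff.1 hpiv.mem
  obtain h | ⟨x, h⟩ | ⟨x, h⟩ := C.critical.dominatedBy_or_missesOnly (C.ne_of_mem hv he).symm
    fun h => C.not_adj v hv e he h.symm
  · exact ⟨e, heI, Or.inr rfl, fun z _ => dominatedBy_comm.1 (h z)⟩
  · exact absurd h (hpiv.not_missesOnly C hpiv.mem hvI)
  · have hxS := C.mem_of_missesOnly (C.notMem_of_mem_left hv) h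
    have hxI : x ∈ I := by_contra fun hxI => h.2.1 (hpiv.adj (mem_sdiff.2 ⟨hxS, hxI⟩)).symm
    exact ⟨x, hxI, Or.inl hxS, h.2.2⟩

theorem adj_of_mem_left_and_eq_of_mem_right (C : CutConfig G S I P Q) (hpiv : IsPivot G S I e w)
    (he : e ∈ Q) (hv : v ∈ P) (hvI : v ∉ I) :
    (∀ a ∈ I, a ∈ P → G.Adj v a) ∧ ∀ b ∈ I, b ∈ Q → b = e := by
  obtain ⟨y, hyI, hyS, hdom⟩ := C.exists_partner hpiv he hv hvI
  have hyP : y ∉ P := fun hyP => hyS.elim (C.notMem_of_mem_left hyP) (C.ne_of_mem hyP he)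
  refine ⟨fun a haI haP => ?_, fun b hbI hbQ => by_contra fun hbe => ?_⟩
  · obtain rfl | rfl | h | h := hdom a (C.ne_of_mem haP he)
    exacts [absurd haI hvI, absurd haP hyP, h, absurd h (C.indep.not_adj hyI haI)]
  · obtain rfl | rfl | h | h := hdom b hbe
    · exact C.ne_of_mem hv hbQ rfl
    · exact hyS.elim (C.notMem_of_mem_right hbQ) hbe
    · exact C.not_adj v hv b hbQ h
    · exact C.indep.not_adj hyI hbI h

theorem false_of_forall_adj (C : CutConfig G S I P Q) (hpiv : IsPivot G S I e w) (he : e ∈ Q)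
    (hv : v ∈ P) (hvI : v ∉ I) (hA : ∀ a ∈ I, a ∈ P → G.Adj v a) (hB : ∀ b ∈ I, b ∈ Q → b = e)
    (ha : a ∈ (I \ S).erase e) (hall : ∀ u ∈ Q, u ∉ I → G.Adj (w a) u) : False := by
  have hx := hpiv.missesOnly a ha
  obtain ⟨haI, haS⟩ := mem_sdiff.1 (mem_of_mem_erase ha)
  have hxv := hpiv.adj_of_mem_sdiff C he hv hvI (C.mem_sdiff_of_missesOnly hpiv.mem hx)
  -- `{w a, v}` is a dominating edge
  refine C.critical.not_dominatedBy hxv fun z => ?_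
  by_cases hzS : z ∈ S
  · by_cases hzI : z ∈ I
    · exact .inr (.inr (.inl (hx.adj_of_mem C.indep (mem_sdiff.1 hpiv.mem).1 hzI
        (ne_of_mem_of_not_mem hzS haS))))
    · exact .inr (.inr (.inr (hpiv.adj_of_mem_sdiff C he hv hvI (mem_sdiff.2 ⟨hzS, hzI⟩)).symm))
  obtain hzP | hzQ := (C.notMem_iff z).1 hzS
  · by_cases hzI : z ∈ I
    · exact .inr (.inr (.inr (hA z hzI hzP)))
    obtain rfl | h | h | h := hx.2.2 z (ne_of_mem_of_not_mem haI hzI).symm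
    · exact absurd rfl (C.ne_of_mem hzP he)
    · exact .inl h
    · exact absurd h.symm (C.not_adj z hzP e he)
    · exact .inr (.inr (.inl h))
  · by_cases hzI : z ∈ I
    · exact .inr (.inr (.inl (hB z hzI hzQ ▸ hx.1.symm)))
    · exact .inr (.inr (.inl (hall z hzQ hzI)))

theorem false_of_not_adj (C : CutConfig G S I P Q) (hpiv : IsPivot G S I e w)
    (haI : a ∈ I) (haP : a ∈ P) (hb : b ∈ (I \ S).erase e) (hbP : b ∈ P) (hab : a ≠ b)
    (hu : u ∈ Q) (huI : u ∉ I) (hbu : ¬G.Adj (w b) u) : False := by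
  have hbIS := mem_of_mem_erase hb
  obtain h | ⟨x, h⟩ | ⟨x, h⟩ :=
    C.critical.dominatedBy_or_missesOnly (C.ne_of_mem hbP hu) (C.not_adj b hbP u hu)
  · obtain rfl | rfl | h | h := h a
    · exact hab rfl
    · exact C.ne_of_mem haP hu rfl
    · exact C.indep.not_adj (mem_sdiff.1 hbIS).1 haI h
    · exact C.not_adj a haP u hu h.symm
  · exact hpiv.not_missesOnly C hbIS huI h
  · have hxS := C.mem_of_missesOnly (C.notMem_of_mem_right hu) h
    have hxa : G.Adj x a := by
      obtain rfl | rfl | h | h := h.2.2 a hab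
      · exact absurd rfl (C.ne_of_mem haP hu)
      · exact absurd hxS (C.notMem_of_mem_left haP)
      · exact absurd h.symm (C.not_adj a haP u hu)
      · exact h
    have hxI : x ∉ I := fun hxI => C.indep.not_adj hxI haI hxa
    exact hbu (hpiv.eq_apply C.indep (mem_sdiff.2 ⟨hxS, hxI⟩) (mem_sdiff.1 hbIS).1 h.2.1 ▸ h.1.symm)

theorem false_of_isPivot (C : CutConfig G S I P Q) (hpiv : IsPivot G S I e w) (he : e ∈ Q) :
    False := by
  obtain ⟨v, hv, hvI⟩ := C.exists_mem_left_notMem hpiv he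
  obtain ⟨hA, hB⟩ := C.adj_of_mem_left_and_eq_of_mem_right hpiv he hv hvI
  have hP : ∀ f ∈ (I \ S).erase e, f ∈ P := fun f hf =>
    have ⟨hfI, hfS⟩ := mem_sdiff.1 (mem_of_mem_erase hf)
    ((C.notMem_iff f).1 hfS).resolve_right fun hfQ => ne_of_mem_erase hf (hB f hfI hfQ)
  obtain ⟨a, ha, b, hb, hab⟩ := one_lt_card.1 hpiv.one_lt_card
  by_cases hall : ∀ u ∈ Q, u ∉ I → G.Adj (w b) u
  · exact C.false_of_forall_adj hpiv he hv hvI hA hB hb hall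
  · simp only [not_forall] at hall
    obtain ⟨u, hu, huI, hbu⟩ := hall
    exact C.false_of_not_adj hpiv (mem_sdiff.1 (mem_of_mem_erase ha)).1 (hP a ha) hb (hP b hb)
      hab hu huI hbu

end CutConfig

end

theorem stmt_15_general {V : Type*} [Fintype V] [DecidableEq V] (G : SimpleGraph V)
    (hG : G.IsCritical3) (S H1 H2 I : Finset V)
    (hmins : S.card = G.conn)
    (hpart : ∀ z : V, z ∉ S ↔ (z ∈ H1 ∨ z ∈ H2))
    (hdisj : Disjoint H1 H2)
    (hsep : ∀ a ∈ H1, ∀ b ∈ H2, ¬G.Adj a b)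
    (h1 : H1.Nonempty) (h2 : H2.Nonempty)
    (hI : G.IsIndepSet' ↑I) (hImax : I.card = G.indepNum')
    (hSI : 2 ≤ (S \ I).card) (ha : G.conn + 1 ≤ G.indepNum') :
    H1.card = 1 ∨ H2.card = 1 := by
  by_contra! hcard
  have C : CutConfig G S I H1 H2 :=
    { critical := hG
      card_le_of_isVertexCut := fun T hT => hmins ▸ Nat.sInf_le ⟨T, rfl, hT⟩
      notMem_iff := hpart
      disjoint := hdisj
      not_adj := hsep
      indep := hI
      one_lt_card_left := lt_of_le_of_ne h1.card_pos hcard.1.symm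
      one_lt_card_right := lt_of_le_of_ne h2.card_pos hcard.2.symm }
  obtain ⟨e, w, hpiv⟩ := C.exists_isPivot hSI (by omega)
  obtain he | he := (hpart e).1 (mem_sdiff.1 hpiv.mem).2
  · exact C.symm.false_of_isPivot hpiv he
  · exact C.false_of_isPivot hpiv he

theorem stmt_15 {V : Type*} [Fintype V] [DecidableEq V] (G : SimpleGraph V)
    (hG : G.IsCritical3) (S H1 H2 I : Finset V)
    (hcut : G.IsVertexCut S) (hmins : S.card = G.conn)
    (hpart : ∀ z : V, z ∉ S ↔ (z ∈ H1 ∨ z ∈ H2))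
    (hdisj : Disjoint H1 H2)
    (hsep : ∀ a ∈ H1, ∀ b ∈ H2, ¬G.Adj a b)
    (h1 : H1.Nonempty) (h2 : H2.Nonempty)
    (hI : G.IsIndepSet' ↑I) (hImax : I.card = G.indepNum')
    (hSI : 2 ≤ (S \ I).card) (ha : G.conn + 1 ≤ G.indepNum') :
    H1.card = 1 ∨ H2.card = 1 :=
  stmt_15_general G hG S H1 H2 I hmins hpart hdisj hsep h1 h2 hI hImax hSI ha
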